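/- Let E ⊂ ℝ² be a bounded Lipschitz domain. If u is a C¹ displacement on the closure of E whose exact stress σ(u) = C ε(u) is an affine self-equilibrated field, i.e., σ(u) = Pβ̄ for some β̄ ∈ ℝ⁷, and the body force is zero (σp = 0), then the RCP solution β = H⁻¹ g with g = ∫_{∂E} Pᵀ N_Eᵀ u recovers the exact stress: β = β̄. -/

import Mathlib

open MeasureTheory Matrix

/-- Partial derivative in the x-direction. -/
noncomputable def pdx (f : ℝ × ℝ → ℝ) (p : ℝ × ℝ) : ℝ := deriv (fun t => f (t, p.2)) p.1

/-- Partial derivative in the y-direction. -/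
noncomputable def pdy (f : ℝ × ℝ → ℝ) (p : ℝ × ℝ) : ℝ := deriv (fun t => f (p.1, t)) p.2

/-- The 3×7 matrix of self-equilibrated affine stress modes. -/
noncomputable def Pmat (p : ℝ × ℝ) : Matrix (Fin 3) (Fin 7) ℝ :=
  !![1, 0, 0, p.2, 0, p.1, 0;
     0, 1, 0, 0, p.1, 0, p.2;
     0, 0, 1, 0, 0, -p.2, -p.1]

/-- Engineering strain vector (εx, εy, γxy) of the displacement (u1, u2). -/
noncomputable def strain (u1 u2 : ℝ × ℝ → ℝ) (p : ℝ × ℝ) : Fin 3 → ℝ :=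
  ![pdx u1 p, pdy u2 p, pdy u1 p + pdx u2 p]

/-!
Each column of `Pmat` is a self-equilibrated (divergence-free) affine stress field `σᵢ`, so the
product rule gives `div (σᵢ u) = σᵢ : ε(u)`. By the divergence theorem
`g = ∫_E Pᵀ ε(u) = ∫_E Pᵀ C⁻¹ P β̄ = H β̄`. The Gram matrix `H` is invertible because
`vᵀ H v = ∫_E (P v)ᵀ C⁻¹ (P v)` vanishes only if the affine field `P v` vanishes on the open set
`E`, which forces `v = 0`.
-/

open Set

section PartialDerivatives

variable {f g : ℝ × ℝ → ℝ} {p : ℝ × ℝ}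

lemma DifferentiableAt.slice_fst (hf : DifferentiableAt ℝ f p) :
    DifferentiableAt ℝ (fun t => f (t, p.2)) p.1 :=
  hf.comp p.1 (differentiableAt_id.prodMk (differentiableAt_const _))

lemma DifferentiableAt.slice_snd (hf : DifferentiableAt ℝ f p) :
    DifferentiableAt ℝ (fun t => f (p.1, t)) p.2 :=
  hf.comp p.2 ((differentiableAt_const _).prodMk differentiableAt_id)

lemma pdx_add (hf : DifferentiableAt ℝ f p) (hg : DifferentiableAt ℝ g p) :
    pdx (fun q => f q + g q) p = pdx f p + pdx g p :=
  deriv_add hf.slice_fst hg.slice_fst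

lemma pdy_add (hf : DifferentiableAt ℝ f p) (hg : DifferentiableAt ℝ g p) :
    pdy (fun q => f q + g q) p = pdy f p + pdy g p :=
  deriv_add hf.slice_snd hg.slice_snd

lemma pdx_mul (hf : DifferentiableAt ℝ f p) (hg : DifferentiableAt ℝ g p) :
    pdx (fun q => f q * g q) p = pdx f p * g p + f p * pdx g p :=
  deriv_mul hf.slice_fst hg.slice_fst

lemma pdy_mul (hf : DifferentiableAt ℝ f p) (hg : DifferentiableAt ℝ g p) :
    pdy (fun q => f q * g q) p = pdy f p * g p + f p * pdy g p :=
  deriv_mul hf.slice_snd hg.slice_snd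

/-- `div (σ u) = σ : ε(u) + (div σ) · u` for the symmetric stress `σ = (s₁, s₂, s₃)` in Voigt
notation; the last term drops out since `σ` is in equilibrium. -/
lemma div_stress_mul_displacement {u₁ u₂ s₁ s₂ s₃ : ℝ × ℝ → ℝ}
    (hu₁ : DifferentiableAt ℝ u₁ p) (hu₂ : DifferentiableAt ℝ u₂ p)
    (hs₁ : DifferentiableAt ℝ s₁ p) (hs₂ : DifferentiableAt ℝ s₂ p)
    (hs₃ : DifferentiableAt ℝ s₃ p)
    (heq₁ : pdx s₁ p + pdy s₃ p = 0) (heq₂ : pdx s₃ p + pdy s₂ p = 0) :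
    pdx (fun q => u₁ q * s₁ q + u₂ q * s₃ q) p + pdy (fun q => u₁ q * s₃ q + u₂ q * s₂ q) p
      = ![s₁ p, s₂ p, s₃ p] ⬝ᵥ strain u₁ u₂ p := by
  rw [pdx_add (by fun_prop) (by fun_prop), pdy_add (by fun_prop) (by fun_prop),
    pdx_mul hu₁ hs₁, pdx_mul hu₂ hs₃, pdy_mul hu₁ hs₃, pdy_mul hu₂ hs₂]
  simp only [strain, dotProduct, Fin.sum_univ_three, Matrix.cons_val_zero, Matrix.cons_val_one,
    Matrix.cons_val_two, Matrix.head_cons, Matrix.tail_cons]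
  linear_combination u₁ p * heq₁ + u₂ p * heq₂

end PartialDerivatives

lemma contDiff_Pmat_apply (k : Fin 3) (i : Fin 7) : ContDiff ℝ ⊤ fun q => Pmat q k i := by
  fin_cases k <;> fin_cases i <;> simp [Pmat] <;> fun_prop

lemma continuous_Pmat : Continuous Pmat :=
  continuous_matrix fun k i => (contDiff_Pmat_apply k i).continuous

lemma Pmat_equilibrium (i : Fin 7) (p : ℝ × ℝ) :
    pdx (fun q => Pmat q 0 i) p + pdy (fun q => Pmat q 2 i) p = 0 ∧
      pdx (fun q => Pmat q 2 i) p + pdy (fun q => Pmat q 1 i) p = 0 := by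
  fin_cases i <;> simp [pdx, pdy, Pmat]

lemma div_Pmat_mul_displacement {u₁ u₂ : ℝ × ℝ → ℝ} {p : ℝ × ℝ}
    (hu₁ : DifferentiableAt ℝ u₁ p) (hu₂ : DifferentiableAt ℝ u₂ p) (i : Fin 7) :
    pdx (fun q => u₁ q * Pmat q 0 i + u₂ q * Pmat q 2 i) p
        + pdy (fun q => u₁ q * Pmat q 2 i + u₂ q * Pmat q 1 i) p
      = ((Pmat p)ᵀ *ᵥ strain u₁ u₂ p) i := by
  have hP k := ((contDiff_Pmat_apply k i).differentiable (by simp)) p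
  rw [div_stress_mul_displacement hu₁ hu₂ (hP 0) (hP 1) (hP 2) (Pmat_equilibrium i p).1
    (Pmat_equilibrium i p).2]
  simp [mulVec, dotProduct, Fin.sum_univ_three]

lemma Pmat_mulVec (p : ℝ × ℝ) (x : Fin 7 → ℝ) :
    Pmat p *ᵥ x = ![x 0 + p.2 * x 3 + p.1 * x 5, x 1 + p.1 * x 4 + p.2 * x 6,
      x 2 - p.2 * x 5 - p.1 * x 6] := by
  ext k; fin_cases k <;> simp [Pmat, mulVec, dotProduct, Fin.sum_univ_seven]; ring

/-- Three non-collinear points of `E` already suffice. -/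
lemma eq_zero_of_Pmat_mulVec_eqOn {E : Set (ℝ × ℝ)} (hE : IsOpen E) (hne : E.Nonempty)
    {x : Fin 7 → ℝ} (hx : ∀ p ∈ E, Pmat p *ᵥ x = 0) : x = 0 := by
  obtain ⟨⟨a, b⟩, hab⟩ := hne
  obtain ⟨ε, hε, hball⟩ := Metric.isOpen_iff.mp hE _ hab
  have hδ : ε / 2 ≠ 0 := by positivity
  have hax : (a + ε / 2, b) ∈ E := hball (by simp [Prod.dist_eq, abs_of_pos hε]; linarith)
  have hay : (a, b + ε / 2) ∈ E := hball (by simp [Prod.dist_eq, abs_of_pos hε]; linarith)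
  have key : ∀ s t, (s, t) ∈ E → x 0 + t * x 3 + s * x 5 = 0 ∧ x 1 + s * x 4 + t * x 6 = 0 ∧
      x 2 - t * x 5 - s * x 6 = 0 := fun s t hst => by
    simpa [Pmat_mulVec, funext_iff, Fin.forall_fin_succ] using hx _ hst
  obtain ⟨h₀, h₁, h₂⟩ := key _ _ hab
  obtain ⟨hx₀, hx₁, hx₂⟩ := key _ _ hax
  obtain ⟨hy₀, hy₁, hy₂⟩ := key _ _ hay
  have h₃ : x 3 = 0 := mul_left_cancel₀ hδ (by linarith)
  have h₄ : x 4 = 0 := mul_left_cancel₀ hδ (by linarith)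
  have h₅ : x 5 = 0 := mul_left_cancel₀ hδ (by linarith)
  have h₆ : x 6 = 0 := mul_left_cancel₀ hδ (by linarith)
  simp only [h₃, h₄, h₅, h₆, mul_zero, add_zero, sub_zero] at h₀ h₁ h₂
  ext j; fin_cases j <;> assumption

section MatrixIntegral

variable {α m n : Type*} [Fintype n] [MeasurableSpace α] {μ : Measure α}

lemma Matrix.of_integral_mulVec {M : α → Matrix m n ℝ}
    (hM : ∀ i j, Integrable (fun x => M x i j) μ) (v : n → ℝ) :
    (Matrix.of fun i j => ∫ x, M x i j ∂μ) *ᵥ v = fun i => ∫ x, (M x *ᵥ v) i ∂μ := by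
  ext i
  simp only [mulVec, dotProduct, of_apply]
  rw [integral_finsetSum _ fun j _ => (hM i j).mul_const (v j)]
  simp_rw [integral_mul_const]

lemma Matrix.dotProduct_integral {f : α → n → ℝ} (hf : ∀ i, Integrable (fun x => f x i) μ)
    (v : n → ℝ) : v ⬝ᵥ (fun i => ∫ x, f x i ∂μ) = ∫ x, v ⬝ᵥ f x ∂μ := by
  simp only [dotProduct]
  rw [integral_finsetSum _ fun i _ => (hf i).const_mul (v i)]
  simp_rw [integral_const_mul]

end MatrixIntegral

section Gram

variable {X : Type*} [TopologicalSpace X] [MeasurableSpace X] {μ : Measure X} {E : Set X}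

lemma Continuous.integrableOn_of_isCompact_closure [T2Space X] [OpensMeasurableSpace X]
    [IsFiniteMeasureOnCompacts μ] {f : X → ℝ} (hf : Continuous f) (hE : IsCompact (closure E)) :
    IntegrableOn f E μ :=
  (hf.continuousOn.integrableOn_compact hE).mono_set subset_closure

lemma IsOpen.eqOn_zero_of_setIntegral_eq_zero [μ.IsOpenPosMeasure] (hE : IsOpen E) {f : X → ℝ}
    (hf : Continuous f) (hf₀ : 0 ≤ f) (hfi : IntegrableOn f E μ) (h : ∫ x in E, f x ∂μ = 0) :
    EqOn f 0 E :=
  μ.eqOn_open_of_ae_eq ((integral_eq_zero_iff_of_nonneg hf₀ hfi).mp h) hE hf.continuousOn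
    continuousOn_const

/-- `vᵀ (∫_E Aᵀ B A) v = ∫_E (A v)ᵀ B (A v)` has a continuous nonnegative integrand, so it
vanishes only if `A v = 0` on the open set `E`. -/
lemma isUnit_det_setIntegral_transpose_mul_mul {m n : Type*} [Fintype m] [Fintype n]
    [DecidableEq n] [T2Space X] [OpensMeasurableSpace X] [IsFiniteMeasureOnCompacts μ]
    [μ.IsOpenPosMeasure] (hE : IsOpen E) (hEc : IsCompact (closure E)) {A : X → Matrix m n ℝ}
    (hA : Continuous A) {B : Matrix m m ℝ} (hB : B.PosDef)
    (hsep : ∀ v, (∀ x ∈ E, A x *ᵥ v = 0) → v = 0) :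
    IsUnit (Matrix.of fun i j => ∫ x in E, ((A x)ᵀ * B * A x) i j ∂μ).det := by
  rw [isUnit_iff_ne_zero, Ne, ← Matrix.exists_mulVec_eq_zero_iff]
  rintro ⟨v, hv, hGv⟩
  refine hv (hsep v fun x hx => ?_)
  have hG : Continuous fun x => (A x)ᵀ * B * A x :=
    (hA.matrix_transpose.matrix_mul continuous_const).matrix_mul hA
  have hGv_cont : Continuous fun x => ((A x)ᵀ * B * A x) *ᵥ v := hG.matrix_mulVec continuous_const
  have hQ : Continuous fun x => v ⬝ᵥ (((A x)ᵀ * B * A x) *ᵥ v) :=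
    continuous_const.dotProduct hGv_cont
  have hQ₀ : 0 ≤ fun x => v ⬝ᵥ (((A x)ᵀ * B * A x) *ᵥ v) := fun x => by
    simpa [← mulVec_mulVec, dotProduct_mulVec, vecMul_transpose] using
      hB.posSemidef.dotProduct_mulVec_nonneg (A x *ᵥ v)
  have hint : ∫ x in E, v ⬝ᵥ (((A x)ᵀ * B * A x) *ᵥ v) ∂μ = 0 := by
    have hGv_int i : IntegrableOn (fun x => (((A x)ᵀ * B * A x) *ᵥ v) i) E μ :=
      ((continuous_apply i).comp hGv_cont).integrableOn_of_isCompact_closure hEc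
    have hG_int i j : IntegrableOn (fun x => ((A x)ᵀ * B * A x) i j) E μ :=
      (hG.matrix_elem i j).integrableOn_of_isCompact_closure hEc
    rw [← Matrix.dotProduct_integral hGv_int, ← Matrix.of_integral_mulVec hG_int, hGv,
      dotProduct_zero]
  have hQx :=
    hE.eqOn_zero_of_setIntegral_eq_zero hQ hQ₀ (hQ.integrableOn_of_isCompact_closure hEc) hint hx
  by_contra hne
  refine (hB.dotProduct_mulVec_pos hne).ne' ?_
  simpa [← mulVec_mulVec, dotProduct_mulVec, vecMul_transpose] using hQx

end Gram

/-- The boundary integrals defining `g` are expressed through the outward flux functional `flux`,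
characterised by the divergence theorem on `E`. -/
theorem stmt15_general (E : Set (ℝ × ℝ)) (hEo : IsOpen E)
    (hEb : Bornology.IsBounded E) (hEpos : 0 < volume E)
    (C : Matrix (Fin 3) (Fin 3) ℝ) (hC : C.PosDef)
    (flux : (ℝ × ℝ → ℝ × ℝ) → ℝ)
    (hdiv : ∀ F : ℝ × ℝ → ℝ × ℝ, ContDiffOn ℝ 1 F (closure E) →
      flux F = ∫ p in E, (pdx (fun q => (F q).1) p + pdy (fun q => (F q).2) p))
    (u1 u2 : ℝ × ℝ → ℝ)
    (hu : ContDiffOn ℝ 1 (fun p => (u1 p, u2 p)) (closure E))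
    (βb : Fin 7 → ℝ)
    (hexact : ∀ p ∈ E, C *ᵥ strain u1 u2 p = Pmat p *ᵥ βb)
    (H : Matrix (Fin 7) (Fin 7) ℝ)
    (hH : ∀ i j, H i j = ∫ p in E, ((Pmat p)ᵀ * C⁻¹ * Pmat p) i j)
    (g : Fin 7 → ℝ)
    (hg : ∀ i, g i = flux (fun p =>
      (u1 p * Pmat p 0 i + u2 p * Pmat p 2 i,
       u1 p * Pmat p 2 i + u2 p * Pmat p 1 i))) :
    H⁻¹ *ᵥ g = βb := by
  have hEc : IsCompact (closure E) := hEb.isCompact_closure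
  have hH' : H = Matrix.of fun i j => ∫ p in E, ((Pmat p)ᵀ * C⁻¹ * Pmat p) i j := Matrix.ext hH
  have hu₁ : ContDiffOn ℝ 1 u1 (closure E) := hu.fst
  have hu₂ : ContDiffOn ℝ 1 u2 (closure E) := hu.snd
  have hdiff : ∀ p ∈ E, DifferentiableAt ℝ u1 p ∧ DifferentiableAt ℝ u2 p := fun p hp =>
    have hnhds : closure E ∈ nhds p := Filter.mem_of_superset (hEo.mem_nhds hp) subset_closure
    ⟨(hu₁.contDiffAt hnhds).differentiableAt one_ne_zero,
      (hu₂.contDiffAt hnhds).differentiableAt one_ne_zero⟩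
  have hstrain : ∀ p ∈ E, strain u1 u2 p = C⁻¹ *ᵥ (Pmat p *ᵥ βb) := fun p hp => by
    rw [← hexact p hp, mulVec_mulVec, nonsing_inv_mul C ((isUnit_iff_isUnit_det C).mp hC.isUnit),
      one_mulVec]
  have hgH : g = H *ᵥ βb := by
    have hG i j : Integrable (fun p => ((Pmat p)ᵀ * C⁻¹ * Pmat p) i j) (volume.restrict E) :=
      (((continuous_Pmat.matrix_transpose.matrix_mul continuous_const).matrix_mul
        continuous_Pmat).matrix_elem i j).integrableOn_of_isCompact_closure hEc
    rw [hH', Matrix.of_integral_mulVec hG]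
    ext i
    have hP k : ContDiffOn ℝ 1 (fun q => Pmat q k i) (closure E) :=
      (contDiff_Pmat_apply k i).contDiffOn.of_le (by simp)
    rw [hg i, hdiv _ ((hu₁.mul (hP 0) |>.add (hu₂.mul (hP 2))).prodMk
      (hu₁.mul (hP 2) |>.add (hu₂.mul (hP 1))))]
    refine setIntegral_congr_fun hEo.measurableSet fun p hp => ?_
    rw [div_Pmat_mul_displacement (hdiff p hp).1 (hdiff p hp).2, hstrain p hp, mulVec_mulVec,
      mulVec_mulVec, Matrix.mul_assoc]
  have hHdet : IsUnit H.det := hH' ▸ isUnit_det_setIntegral_transpose_mul_mul hEo hEc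
    continuous_Pmat hC.inv fun x hx => eq_zero_of_Pmat_mulVec_eqOn hEo
      (nonempty_of_measure_ne_zero hEpos.ne') hx
  rw [hgH, mulVec_mulVec, nonsing_inv_mul H hHdet, one_mulVec]

/-- Consistency of the RCP recovery: if the exact stress Cε(u) is an affine
self-equilibrated field Pβ̄ and the body force vanishes, then the RCP solution
β = H⁻¹g recovers β̄ exactly.  The boundary integrals defining g are expressed
through the outward flux functional `flux`, characterised by the divergence
theorem on E. -/
theorem stmt15 (E : Set (ℝ × ℝ)) (hEo : IsOpen E) (hEm : MeasurableSet E)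
    (hEb : Bornology.IsBounded E) (hEpos : 0 < volume E)
    (C : Matrix (Fin 3) (Fin 3) ℝ) (hCsymm : C.IsSymm) (hC : C.PosDef)
    (flux : (ℝ × ℝ → ℝ × ℝ) → ℝ)
    (hdiv : ∀ F : ℝ × ℝ → ℝ × ℝ, ContDiffOn ℝ 1 F (closure E) →
      flux F = ∫ p in E, (pdx (fun q => (F q).1) p + pdy (fun q => (F q).2) p))
    (u1 u2 : ℝ × ℝ → ℝ)
    (hu : ContDiffOn ℝ 1 (fun p => (u1 p, u2 p)) (closure E))
    (βb : Fin 7 → ℝ)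
    (hexact : ∀ p ∈ E, C *ᵥ strain u1 u2 p = Pmat p *ᵥ βb)
    (H : Matrix (Fin 7) (Fin 7) ℝ)
    (hH : ∀ i j, H i j = ∫ p in E, ((Pmat p)ᵀ * C⁻¹ * Pmat p) i j)
    (g : Fin 7 → ℝ)
    (hg : ∀ i, g i = flux (fun p =>
      (u1 p * Pmat p 0 i + u2 p * Pmat p 2 i,
       u1 p * Pmat p 2 i + u2 p * Pmat p 1 i))) :
    H⁻¹ *ᵥ g = βb :=
  stmt15_general E hEo hEb hEpos C hC flux hdiv u1 u2 hu βb hexact H hH g hg
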